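/- arXiv:math/0510473 — 3 statements merged into one kernel-verified Lean document; each statement's English description precedes it below -/
import Mathlib

section
/- Assume the deterministic Skorokhod setup: f : ℝ → ℝ is 1-Lipschitz, D = {(x₁,x₂) ∈ ℝ² : x₂ > f(x₁)}, K = {(x₁,x₂) ∈ ℝ² : x₂ > |x₁|} with closure K̄ = {x₂ ≥ |x₁|}; X, Y : [0,∞) → ℝ² are continuous, take values in the closure D̄ = {x₂ ≥ f(x₁)}, and satisfy X₀ = Y₀; moreover X_t = X₀ + w_t + A_t and Y_t = Y₀ + w_t + B_t for all t ≥ 0, where w, A, B : [0,∞) → ℝ² are continuous with w₀ = A₀ = B₀ = 0, A_t − A_s ∈ K̄ and B_t − B_s ∈ K̄ whenever 0 ≤ s ≤ t, A is constant on every interval on which X remains in D (if X_u ∈ D for all u ∈ (s,t) then A_s = A_t), and B is constant on every interval on which Y remains in D. Then for every t ≥ 0, X_t − Y_t ∉ K and Y_t − X_t ∉ K. -/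
/-!
Let `σ ≤ t` be the last time before `t` at which `X - Y` lies outside `K`. On `(σ, t)` the
difference `X - Y` lies in `K`; since `Y` stays above the graph of a `1`-Lipschitz function and
`K` is the cone of directions that keep such a region, `X` stays strictly inside `D`, so `A` does
not move on `[σ, t]`. Hence `X t - Y t = (X σ - Y σ) - (B t - B σ)` is a point outside `K` minus a
point of `K̄`, which is again outside `K` because `K + K̄ ⊆ K`. Swapping the roles of `X` and `Y`
gives the other half.
-/

open Set

def openCone : Set (ℝ × ℝ) := {p | |p.1| < p.2}

def closedCone : Set (ℝ × ℝ) := {p | |p.1| ≤ p.2}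

theorem isOpen_openCone : IsOpen openCone :=
  isOpen_lt continuous_fst.abs continuous_snd

theorem add_mem_openCone {p q : ℝ × ℝ} (hp : p ∈ openCone) (hq : q ∈ closedCone) :
    p + q ∈ openCone := by
  simp only [openCone, closedCone, mem_ofPred_eq, Prod.fst_add, Prod.snd_add] at *
  linarith [abs_add_le p.1 q.1]

theorem sub_notMem_openCone {p q : ℝ × ℝ} (hp : p ∉ openCone) (hq : q ∈ closedCone) :
    p - q ∉ openCone := fun h ↦ hp (by simpa using add_mem_openCone h hq)

theorem lt_of_sub_mem_openCone {f : ℝ → ℝ} (hf : LipschitzWith 1 f) {x y : ℝ × ℝ}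
    (hy : f y.1 ≤ y.2) (hxy : x - y ∈ openCone) : f x.1 < x.2 := by
  have hlip : f x.1 - f y.1 ≤ |x.1 - y.1| :=
    (le_abs_self _).trans (by simpa [Real.dist_eq] using hf.dist_le_mul x.1 y.1)
  simp only [openCone, mem_ofPred_eq, Prod.fst_sub, Prod.snd_sub] at hxy
  linarith

theorem exists_last_mem_of_continuousOn {α : Type*} [TopologicalSpace α] {g : ℝ → α}
    {C : Set α} {a t : ℝ} (hg : ContinuousOn g (Icc a t)) (hC : IsClosed C) (hat : a ≤ t)
    (ha : g a ∈ C) : ∃ σ ∈ Icc a t, g σ ∈ C ∧ ∀ u ∈ Ioo σ t, g u ∉ C := by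
  have hS : IsCompact (Icc a t ∩ g ⁻¹' C) :=
    isCompact_Icc.of_isClosed_subset (hg.preimage_isClosed_of_isClosed isClosed_Icc hC)
      inter_subset_left
  obtain ⟨σ, ⟨hσ, hgσ⟩, hmax⟩ := hS.exists_isGreatest ⟨a, ⟨left_mem_Icc.2 hat, ha⟩⟩
  refine ⟨σ, hσ, hgσ, fun u hu hgu ↦ ?_⟩
  exact hu.1.not_ge (hmax ⟨⟨hσ.1.trans hu.1.le, hu.2.le⟩, hgu⟩)

theorem sub_notMem_openCone_of_skorokhod {f : ℝ → ℝ} (hf : LipschitzWith 1 f)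
    {X Y A B : ℝ → ℝ × ℝ} (hXc : ContinuousOn X (Ici 0)) (hYc : ContinuousOn Y (Ici 0))
    (hYD : ∀ t, 0 ≤ t → f (Y t).1 ≤ (Y t).2)
    (hdiff : ∀ t, 0 ≤ t → X t - Y t = A t - B t) (h0 : X 0 = Y 0)
    (hBincr : ∀ s t, 0 ≤ s → s ≤ t → B t - B s ∈ closedCone)
    (hAconst : ∀ s t, 0 ≤ s → s ≤ t →
      (∀ u ∈ Ioo s t, f (X u).1 < (X u).2) → A t = A s)
    {t : ℝ} (ht : 0 ≤ t) : X t - Y t ∉ openCone := by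
  have hgc : ContinuousOn (X - Y) (Icc 0 t) :=
    (hXc.mono Icc_subset_Ici_self).sub (hYc.mono Icc_subset_Ici_self)
  have h0' : (X - Y) 0 ∈ openConeᶜ := by
    simp [h0, openCone]
  obtain ⟨σ, ⟨hσ0, hσt⟩, hσ, hlast⟩ :=
    exists_last_mem_of_continuousOn hgc isOpen_openCone.isClosed_compl ht h0'
  have hXD : ∀ u ∈ Ioo σ t, f (X u).1 < (X u).2 := fun u hu ↦
    lt_of_sub_mem_openCone hf (hYD u (hσ0.trans hu.1.le)) (not_not.1 (hlast u hu))
  have hA : A t = A σ := hAconst σ t hσ0 hσt hXD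
  have hsplit : X t - Y t = (X σ - Y σ) - (B t - B σ) := by
    rw [hdiff t ht, hdiff σ hσ0, hA]
    abel
  rw [hsplit]
  exact sub_notMem_openCone hσ (hBincr σ t hσ0 hσt)

theorem diff_not_mem_cone_general
    (f : ℝ → ℝ) (hf : LipschitzWith 1 f)
    (X Y w A B : ℝ → ℝ × ℝ)
    (hXc : ContinuousOn X (Set.Ici 0)) (hYc : ContinuousOn Y (Set.Ici 0))
    (hXD : ∀ t, 0 ≤ t → f (X t).1 ≤ (X t).2)
    (hYD : ∀ t, 0 ≤ t → f (Y t).1 ≤ (Y t).2)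
    (h0 : X 0 = Y 0)
    (hXeq : ∀ t, 0 ≤ t → X t = X 0 + w t + A t)
    (hYeq : ∀ t, 0 ≤ t → Y t = Y 0 + w t + B t)
    (hAincr : ∀ s t, 0 ≤ s → s ≤ t → |(A t - A s).1| ≤ (A t - A s).2)
    (hBincr : ∀ s t, 0 ≤ s → s ≤ t → |(B t - B s).1| ≤ (B t - B s).2)
    (hAconst : ∀ s t, 0 ≤ s → s ≤ t →
      (∀ u, u ∈ Set.Ioo s t → f (X u).1 < (X u).2) → A t = A s)
    (hBconst : ∀ s t, 0 ≤ s → s ≤ t →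
      (∀ u, u ∈ Set.Ioo s t → f (Y u).1 < (Y u).2) → B t = B s) :
    ∀ t, 0 ≤ t →
      X t - Y t ∉ {p : ℝ × ℝ | |p.1| < p.2} ∧
      Y t - X t ∉ {p : ℝ × ℝ | |p.1| < p.2} := by
  intro t ht
  have hXY : ∀ s, 0 ≤ s → X s - Y s = A s - B s := fun s hs ↦ by
    rw [hXeq s hs, hYeq s hs, h0]; abel
  have hYX : ∀ s, 0 ≤ s → Y s - X s = B s - A s := fun s hs ↦ by
    rw [hXeq s hs, hYeq s hs, h0]; abel
  exact ⟨sub_notMem_openCone_of_skorokhod hf hXc hYc hYD hXY h0 hBincr hAconst ht,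
    sub_notMem_openCone_of_skorokhod hf hYc hXc hXD hYX h0.symm hAincr hBconst ht⟩

/-- Deterministic Skorokhod setup: the difference of two solutions never enters
the open cone K = {(x₁,x₂) : x₂ > |x₁|} in either direction. -/
theorem diff_not_mem_cone
    (f : ℝ → ℝ) (hf : LipschitzWith 1 f)
    (X Y w A B : ℝ → ℝ × ℝ)
    (hXc : ContinuousOn X (Set.Ici 0)) (hYc : ContinuousOn Y (Set.Ici 0))
    (hwc : ContinuousOn w (Set.Ici 0))
    (hAc : ContinuousOn A (Set.Ici 0)) (hBc : ContinuousOn B (Set.Ici 0))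
    (hXD : ∀ t, 0 ≤ t → f (X t).1 ≤ (X t).2)
    (hYD : ∀ t, 0 ≤ t → f (Y t).1 ≤ (Y t).2)
    (h0 : X 0 = Y 0)
    (hXeq : ∀ t, 0 ≤ t → X t = X 0 + w t + A t)
    (hYeq : ∀ t, 0 ≤ t → Y t = Y 0 + w t + B t)
    (hw0 : w 0 = 0) (hA0 : A 0 = 0) (hB0 : B 0 = 0)
    (hAincr : ∀ s t, 0 ≤ s → s ≤ t → |(A t - A s).1| ≤ (A t - A s).2)
    (hBincr : ∀ s t, 0 ≤ s → s ≤ t → |(B t - B s).1| ≤ (B t - B s).2)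
    (hAconst : ∀ s t, 0 ≤ s → s ≤ t →
      (∀ u, u ∈ Set.Ioo s t → f (X u).1 < (X u).2) → A t = A s)
    (hBconst : ∀ s t, 0 ≤ s → s ≤ t →
      (∀ u, u ∈ Set.Ioo s t → f (Y u).1 < (Y u).2) → B t = B s) :
    ∀ t, 0 ≤ t →
      X t - Y t ∉ {p : ℝ × ℝ | |p.1| < p.2} ∧
      Y t - X t ∉ {p : ℝ × ℝ | |p.1| < p.2} :=
  diff_not_mem_cone_general f hf X Y w A B hXc hYc hXD hYD h0 hXeq hYeq hAincr hBincr hAconst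
    hBconst
end

section
/- Assume the deterministic Skorokhod setup: f : ℝ → ℝ is 1-Lipschitz, D = {(x₁,x₂) ∈ ℝ² : x₂ > f(x₁)}, K = {(x₁,x₂) ∈ ℝ² : x₂ > |x₁|} with closure K̄ = {x₂ ≥ |x₁|}; X, Y : [0,∞) → ℝ² are continuous, take values in the closure D̄ = {x₂ ≥ f(x₁)}, and satisfy X₀ = Y₀; moreover X_t = X₀ + w_t + A_t and Y_t = Y₀ + w_t + B_t for all t ≥ 0, where w, A, B : [0,∞) → ℝ² are continuous with w₀ = A₀ = B₀ = 0, A_t − A_s ∈ K̄ and B_t − B_s ∈ K̄ whenever 0 ≤ s ≤ t, A is constant on every interval on which X remains in D, and B is constant on every interval on which Y remains in D. Write X_t = (X¹_t, X²_t) and Y_t = (Y¹_t, Y²_t). Then for every t ≥ 0, |X²_t − Y²_t| ≤ |X¹_t − Y¹_t|. -/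
open Set

/-!
Suppose `(X t - Y t).2 > |(X t - Y t).1|` at some time `t`, and let `s < t` be the last time
before `t` at which this fails. On `(s, t)` the point `X` lies strictly above `Y` in a direction
of the open cone `K`; since `Y` lies in `D̄` and `f` is `1`-Lipschitz, `X` lies in `D`, so `A` is
constant on `[s, t]`. Then `X t - Y t = (X s - Y s) - (B t - B s)` with `B t - B s ∈ K̄`, and
subtracting a vector of `K̄` cannot push a vector outside `K` into `K`. Exchanging the roles of
`X` and `Y` gives the other half of the inequality.
-/

theorem ContinuousOn.exists_last_le_of_lt {α β : Type*} [ConditionallyCompleteLinearOrder α]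
    [TopologicalSpace α] [OrderTopology α] [LinearOrder β] [TopologicalSpace β]
    [OrderClosedTopology β] {g : α → β} {a b : α} {c : β} (hab : a ≤ b)
    (hg : ContinuousOn g (Icc a b)) (ha : g a ≤ c) (hb : c < g b) :
    ∃ s ∈ Ico a b, g s ≤ c ∧ ∀ u ∈ Ioo s b, c < g u := by
  set S := Icc a b ∩ g ⁻¹' Iic c
  have hS : IsCompact S :=
    isCompact_Icc.of_isClosed_subset (hg.preimage_isClosed_of_isClosed isClosed_Icc isClosed_Iic)
      inter_subset_left
  obtain ⟨s, ⟨⟨has, hsb⟩, hsc⟩, hmax⟩ :=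
    hS.exists_isGreatest ⟨a, ⟨le_rfl, hab⟩, ha⟩
  refine ⟨s, ⟨has, lt_of_le_of_ne hsb ?_⟩, hsc, fun u hu => ?_⟩
  · rintro rfl
    exact hb.not_ge hsc
  · by_contra! hu'
    exact hu.1.not_ge (hmax ⟨⟨has.trans hu.1.le, hu.2.le⟩, hu'⟩)

theorem snd_sub_le_abs_fst_sub_of_abs_fst_le_snd {v b : ℝ × ℝ} (hv : v.2 ≤ |v.1|)
    (hb : |b.1| ≤ b.2) : (v - b).2 ≤ |(v - b).1| := by
  have := abs_sub_abs_le_abs_sub v.1 b.1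
  simp only [Prod.fst_sub, Prod.snd_sub]
  linarith

theorem LipschitzWith.lt_of_le_of_abs_fst_lt_snd_sub {f : ℝ → ℝ} (hf : LipschitzWith 1 f)
    {x y : ℝ × ℝ} (hy : f y.1 ≤ y.2) (hxy : |(x - y).1| < (x - y).2) : f x.1 < x.2 := by
  have : f x.1 - f y.1 ≤ |x.1 - y.1| :=
    (le_abs_self _).trans (by simpa [Real.dist_eq] using hf.dist_le_mul x.1 y.1)
  simp only [Prod.fst_sub, Prod.snd_sub] at hxy
  linarith

theorem snd_sub_le_abs_fst_sub_of_skorokhod {f : ℝ → ℝ} (hf : LipschitzWith 1 f)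
    {X Y A B : ℝ → ℝ × ℝ} (hXc : ContinuousOn X (Ici 0)) (hYc : ContinuousOn Y (Ici 0))
    (hYD : ∀ t, 0 ≤ t → f (Y t).1 ≤ (Y t).2) (h0 : X 0 = Y 0)
    (hXY : ∀ t, 0 ≤ t → X t - Y t = A t - B t)
    (hBincr : ∀ s t, 0 ≤ s → s ≤ t → |(B t - B s).1| ≤ (B t - B s).2)
    (hAconst : ∀ s t, 0 ≤ s → s ≤ t →
      (∀ u, u ∈ Ioo s t → f (X u).1 < (X u).2) → A t = A s)
    {t : ℝ} (ht : 0 ≤ t) : (X t).2 - (Y t).2 ≤ |(X t).1 - (Y t).1| := by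
  by_contra! hlt
  set g : ℝ → ℝ := fun r => (X r - Y r).2 - |(X r - Y r).1|
  have hg : ContinuousOn g (Icc 0 t) := by
    have hXY := (hXc.sub hYc).mono (Icc_subset_Ici_self : Icc 0 t ⊆ Ici 0)
    exact hXY.snd.sub hXY.fst.abs
  obtain ⟨s, ⟨hs0, hst⟩, hgs, hpos⟩ :=
    hg.exists_last_le_of_lt (c := 0) ht (by simp [g, h0]) (sub_pos.2 hlt)
  have hXD : ∀ u ∈ Ioo s t, f (X u).1 < (X u).2 := fun u hu =>
    hf.lt_of_le_of_abs_fst_lt_snd_sub (hYD u (hs0.trans hu.1.le)) (sub_pos.1 (hpos u hu))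
  have hAst : A t = A s := hAconst s t hs0 hst.le hXD
  have hshift : X t - Y t = (X s - Y s) - (B t - B s) := by
    rw [hXY t ht, hXY s hs0, hAst]; abel
  have := snd_sub_le_abs_fst_sub_of_abs_fst_le_snd (sub_nonpos.1 hgs) (hBincr s t hs0 hst.le)
  rw [← hshift] at this
  exact hlt.not_ge this

theorem abs_snd_diff_le_abs_fst_diff_general
    (f : ℝ → ℝ) (hf : LipschitzWith 1 f)
    (X Y w A B : ℝ → ℝ × ℝ)
    (hXc : ContinuousOn X (Set.Ici 0)) (hYc : ContinuousOn Y (Set.Ici 0))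
    (hXD : ∀ t, 0 ≤ t → f (X t).1 ≤ (X t).2)
    (hYD : ∀ t, 0 ≤ t → f (Y t).1 ≤ (Y t).2)
    (h0 : X 0 = Y 0)
    (hXeq : ∀ t, 0 ≤ t → X t = X 0 + w t + A t)
    (hYeq : ∀ t, 0 ≤ t → Y t = Y 0 + w t + B t)
    (hAincr : ∀ s t, 0 ≤ s → s ≤ t → |(A t - A s).1| ≤ (A t - A s).2)
    (hBincr : ∀ s t, 0 ≤ s → s ≤ t → |(B t - B s).1| ≤ (B t - B s).2)
    (hAconst : ∀ s t, 0 ≤ s → s ≤ t →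
      (∀ u, u ∈ Set.Ioo s t → f (X u).1 < (X u).2) → A t = A s)
    (hBconst : ∀ s t, 0 ≤ s → s ≤ t →
      (∀ u, u ∈ Set.Ioo s t → f (Y u).1 < (Y u).2) → B t = B s) :
    ∀ t, 0 ≤ t → |(X t).2 - (Y t).2| ≤ |(X t).1 - (Y t).1| := by
  have hXY : ∀ t, 0 ≤ t → X t - Y t = A t - B t := fun t ht => by
    rw [hXeq t ht, hYeq t ht, h0]; abel
  have hYX : ∀ t, 0 ≤ t → Y t - X t = B t - A t := fun t ht => by
    rw [← neg_sub, hXY t ht, neg_sub]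
  intro t ht
  have hle := snd_sub_le_abs_fst_sub_of_skorokhod hf hXc hYc hYD h0 hXY hBincr hAconst ht
  have hge := snd_sub_le_abs_fst_sub_of_skorokhod hf hYc hXc hXD h0.symm hYX hAincr hBconst ht
  rw [abs_sub_comm] at hge
  exact abs_le.2 ⟨by linarith, hle⟩

/-- Deterministic Skorokhod setup: the second coordinates of two solutions
differ by no more than the first coordinates do. -/
theorem abs_snd_diff_le_abs_fst_diff
    (f : ℝ → ℝ) (hf : LipschitzWith 1 f)
    (X Y w A B : ℝ → ℝ × ℝ)
    (hXc : ContinuousOn X (Set.Ici 0)) (hYc : ContinuousOn Y (Set.Ici 0))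
    (hwc : ContinuousOn w (Set.Ici 0))
    (hAc : ContinuousOn A (Set.Ici 0)) (hBc : ContinuousOn B (Set.Ici 0))
    (hXD : ∀ t, 0 ≤ t → f (X t).1 ≤ (X t).2)
    (hYD : ∀ t, 0 ≤ t → f (Y t).1 ≤ (Y t).2)
    (h0 : X 0 = Y 0)
    (hXeq : ∀ t, 0 ≤ t → X t = X 0 + w t + A t)
    (hYeq : ∀ t, 0 ≤ t → Y t = Y 0 + w t + B t)
    (hw0 : w 0 = 0) (hA0 : A 0 = 0) (hB0 : B 0 = 0)
    (hAincr : ∀ s t, 0 ≤ s → s ≤ t → |(A t - A s).1| ≤ (A t - A s).2)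
    (hBincr : ∀ s t, 0 ≤ s → s ≤ t → |(B t - B s).1| ≤ (B t - B s).2)
    (hAconst : ∀ s t, 0 ≤ s → s ≤ t →
      (∀ u, u ∈ Set.Ioo s t → f (X u).1 < (X u).2) → A t = A s)
    (hBconst : ∀ s t, 0 ≤ s → s ≤ t →
      (∀ u, u ∈ Set.Ioo s t → f (Y u).1 < (Y u).2) → B t = B s) :
    ∀ t, 0 ≤ t → |(X t).2 - (Y t).2| ≤ |(X t).1 - (Y t).1| :=
  abs_snd_diff_le_abs_fst_diff_general f hf X Y w A B hXc hYc hXD hYD h0 hXeq hYeq hAincr hBincr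
    hAconst hBconst
end

section
/- Assume the deterministic Skorokhod setup: f : ℝ → ℝ is 1-Lipschitz, D = {(x₁,x₂) ∈ ℝ² : x₂ > f(x₁)}, K = {(x₁,x₂) ∈ ℝ² : x₂ > |x₁|} with closure K̄ = {x₂ ≥ |x₁|}; X, Y : [0,∞) → ℝ² are continuous, take values in the closure D̄ = {x₂ ≥ f(x₁)}, and satisfy X₀ = Y₀; moreover X_t = X₀ + w_t + A_t and Y_t = Y₀ + w_t + B_t for all t ≥ 0, where w, A, B : [0,∞) → ℝ² are continuous with w₀ = A₀ = B₀ = 0, A_t − A_s ∈ K̄ and B_t − B_s ∈ K̄ whenever 0 ≤ s ≤ t, A is constant on every interval on which X remains in D, and B is constant on every interval on which Y remains in D. Define V : [0,∞) → ℝ² by V_t = X_t if X¹_t < Y¹_t and V_t = Y_t otherwise. Then V is constant up to the driving path on intervals where it stays in D: if 0 ≤ s ≤ t and V_u ∈ D for all u ∈ (s,t), then V_t − w_t = V_s − w_s. -/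
/-! If the first coordinates of the two reflected paths tie, the paths coincide: `X - Y` can never
enter the open cone `K`. Hence `V` is continuous, and near any time where `V ∈ D` it follows a path
that is itself in `D`, whose pushing term is therefore locally constant. So `V - w` is continuous
and locally constant on `(s, t)`, hence constant on `[s, t]`. -/

open Set Filter Topology

theorem eq_of_continuousOn_Icc_of_eventually_eq {E : Type*} [TopologicalSpace E] [T2Space E]
    {g : ℝ → E} {s t : ℝ} (hst : s ≤ t) (hg : ContinuousOn g (Icc s t))
    (hloc : ∀ u ∈ Ioo s t, ∀ᶠ v in 𝓝 u, g v = g u) : g t = g s := by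
  rcases hst.eq_or_lt with rfl | hst
  · rfl
  have : PreconnectedSpace (Ioo s t) := isPreconnected_iff_preconnectedSpace.mp isPreconnected_Ioo
  have hconst : IsLocallyConstant ((Ioo s t).domRestrict g) :=
    (IsLocallyConstant.iff_eventually_eq _).2 fun u =>
      (continuous_subtype_val.tendsto u).eventually (hloc u u.2)
  obtain ⟨m, hm⟩ := nonempty_Ioo.2 hst
  have hEq : EqOn g (fun _ => g m) (Icc s t) :=
    EqOn.of_subset_closure (fun u hu => hconst.apply_eq_of_preconnectedSpace ⟨u, hu⟩ ⟨m, hm⟩)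
      hg continuousOn_const Ioo_subset_Icc_self (closure_Ioo hst.ne).ge
  rw [hEq ⟨hst.le, le_rfl⟩, hEq ⟨le_rfl, hst.le⟩]

theorem ContinuousOn.exists_last_nonpos {ψ : ℝ → ℝ} {a b : ℝ} (hab : a ≤ b)
    (hψ : ContinuousOn ψ (Icc a b)) (ha : ψ a ≤ 0) :
    ∃ τ ∈ Icc a b, ψ τ ≤ 0 ∧ ∀ u ∈ Ioc τ b, 0 < ψ u := by
  have hcompact : IsCompact (Icc a b ∩ ψ ⁻¹' Iic 0) :=
    isCompact_Icc.of_isClosed_subset (hψ.preimage_isClosed_of_isClosed isClosed_Icc isClosed_Iic)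
      inter_subset_left
  obtain ⟨τ, ⟨hτ, hψτ⟩, hmax⟩ := hcompact.exists_isGreatest ⟨a, ⟨le_rfl, hab⟩, ha⟩
  refine ⟨τ, hτ, hψτ, fun u hu => lt_of_not_ge fun hψu => ?_⟩
  exact hu.1.not_ge (hmax ⟨⟨hτ.1.trans hu.1.le, hu.2⟩, hψu⟩)

theorem LipschitzWith.lt_of_abs_sub_lt {f : ℝ → ℝ} (hf : LipschitzWith 1 f) {a b c d : ℝ}
    (hbd : f b ≤ d) (h : |a - b| < c - d) : f a < c := by
  have := hf.le_add_mul a b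
  rw [Real.dist_eq, NNReal.coe_one, one_mul] at this
  linarith

theorem snd_sub_le_abs_fst_sub {p b : ℝ × ℝ} (hp : p.2 ≤ |p.1|) (hb : |b.1| ≤ b.2) :
    (p - b).2 ≤ |(p - b).1| := by
  rw [Prod.fst_sub, Prod.snd_sub]
  linarith [abs_sub_abs_le_abs_sub p.1 b.1]

/-- `X` is reflected in `D̄ = {x₂ ≥ f x₁}`, with driving path `w` and pushing term `A`. -/
structure IsReflectedPath (f : ℝ → ℝ) (X w A : ℝ → ℝ × ℝ) : Prop where
  continuousOn : ContinuousOn X (Ici 0)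
  mem_closure : ∀ t, 0 ≤ t → f (X t).1 ≤ (X t).2
  eq_add : ∀ t, 0 ≤ t → X t = X 0 + w t + A t
  incr_mem_cone : ∀ s t, 0 ≤ s → s ≤ t → |(A t - A s).1| ≤ (A t - A s).2
  const_of_mem_interior : ∀ s t, 0 ≤ s → s ≤ t →
    (∀ u ∈ Ioo s t, f (X u).1 < (X u).2) → A t = A s

noncomputable def leftmost {α : Type*} (X Y : α → ℝ × ℝ) (t : α) : ℝ × ℝ :=
  if (X t).1 < (Y t).1 then X t else Y t

theorem continuousWithinAt_leftmost {α : Type*} [TopologicalSpace α] {X Y : α → ℝ × ℝ}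
    {s : Set α} {r : α}
    (hX : ContinuousWithinAt X s r) (hY : ContinuousWithinAt Y s r)
    (htie : (X r).1 = (Y r).1 → X r = Y r) : ContinuousWithinAt (leftmost X Y) s r := by
  rcases lt_trichotomy (X r).1 (Y r).1 with h | h | h
  · refine hX.congr_of_eventuallyEq ?_ (if_pos h)
    exact (hX.fst.eventually_lt hY.fst h).mono fun u hu => if_pos hu
  · rw [ContinuousWithinAt, htie h] at hX
    rw [ContinuousWithinAt, show leftmost X Y r = Y r from if_neg h.not_lt]
    exact (hX.mono_left inf_le_left).if (hY.mono_left inf_le_left)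
  · refine hY.congr_of_eventuallyEq ?_ (if_neg h.asymm)
    exact (hY.fst.eventually_lt hX.fst h).mono fun u hu => if_neg hu.asymm

namespace IsReflectedPath

variable {f : ℝ → ℝ} {X Y w A B : ℝ → ℝ × ℝ}

theorem sub_eq (hX : IsReflectedPath f X w A) {t : ℝ} (ht : 0 ≤ t) : X t - w t = X 0 + A t := by
  rw [hX.eq_add t ht]; abel

theorem sub_eq_sub (hX : IsReflectedPath f X w A) (hY : IsReflectedPath f Y w B) (h0 : X 0 = Y 0)
    {t : ℝ} (ht : 0 ≤ t) : X t - Y t = A t - B t := by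
  rw [hX.eq_add t ht, hY.eq_add t ht, h0]; abel

/-- After the last time `τ` at which `X - Y` was outside `K`, `X - Y ∈ K` and `Y ∈ D̄` put `X`
in `D`, so `A` stays put, while the increment of `B` in `K̄` cannot move `X - Y` into `K`. -/
theorem snd_sub_le_abs_fst_sub (hX : IsReflectedPath f X w A) (hY : IsReflectedPath f Y w B)
    (h0 : X 0 = Y 0) (hf : LipschitzWith 1 f) {t : ℝ} (ht : 0 ≤ t) :
    (X t - Y t).2 ≤ |(X t - Y t).1| := by
  by_contra! hlt
  set ψ : ℝ → ℝ := fun u => (X u - Y u).2 - |(X u - Y u).1|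
  have hψ : ContinuousOn ψ (Icc 0 t) :=
    ((hX.continuousOn.sub hY.continuousOn).snd.sub
      (hX.continuousOn.sub hY.continuousOn).fst.abs).mono Icc_subset_Ici_self
  obtain ⟨τ, ⟨hτ0, hτt⟩, hψτ, hpos⟩ := hψ.exists_last_nonpos ht (by simp [ψ, h0])
  replace hψτ : (X τ - Y τ).2 ≤ |(X τ - Y τ).1| := sub_nonpos.mp hψτ
  replace hτt : τ < t := hτt.lt_of_ne (by rintro rfl; exact hψτ.not_gt hlt)
  have hA : A t = A τ := hX.const_of_mem_interior τ t hτ0 hτt.le fun u hu => by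
    have := hpos u ⟨hu.1, hu.2.le⟩
    simp only [ψ, Prod.fst_sub, Prod.snd_sub, sub_pos] at this
    exact hf.lt_of_abs_sub_lt (hY.mem_closure u (hτ0.trans hu.1.le)) this
  have hdecomp : X t - Y t = (X τ - Y τ) - (B t - B τ) := by
    rw [hX.sub_eq_sub hY h0 ht, hX.sub_eq_sub hY h0 hτ0, hA]; abel
  rw [hdecomp] at hlt
  exact hlt.not_ge (_root_.snd_sub_le_abs_fst_sub hψτ (hY.incr_mem_cone τ t hτ0 hτt.le))

theorem eq_of_fst_eq (hX : IsReflectedPath f X w A) (hY : IsReflectedPath f Y w B)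
    (h0 : X 0 = Y 0) (hf : LipschitzWith 1 f) {t : ℝ} (ht : 0 ≤ t) (h : (X t).1 = (Y t).1) :
    X t = Y t := by
  have hXY := hX.snd_sub_le_abs_fst_sub hY h0 hf ht
  have hYX := hY.snd_sub_le_abs_fst_sub hX h0.symm hf ht
  simp only [Prod.fst_sub, Prod.snd_sub, h, sub_self, abs_zero, sub_nonpos] at hXY hYX
  exact Prod.ext h (le_antisymm hXY hYX)

theorem eventually_sub_eq (hX : IsReflectedPath f X w A) (hf : Continuous f) {u₀ : ℝ}
    (hu₀ : 0 < u₀) (hD : f (X u₀).1 < (X u₀).2) :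
    ∀ᶠ u in 𝓝 u₀, X u - w u = X u₀ - w u₀ := by
  have hXc : ContinuousAt X u₀ := hX.continuousOn.continuousAt (Ici_mem_nhds hu₀)
  obtain ⟨a, b, hab, hsub⟩ := mem_nhds_iff_exists_Ioo_subset.mp
    (((hf.continuousAt.comp hXc.fst).eventually_lt hXc.snd hD).and (Ioi_mem_nhds hu₀))
  filter_upwards [Ioo_mem_nhds hab.1 hab.2] with u hu
  have hA : A u = A u₀ := by
    rcases le_total u u₀ with h | h
    · exact (hX.const_of_mem_interior u u₀ (hsub hu).2.le h fun v hv =>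
        (hsub ⟨hu.1.trans hv.1, hv.2.trans hab.2⟩).1).symm
    · exact hX.const_of_mem_interior u₀ u hu₀.le h fun v hv =>
        (hsub ⟨hab.1.trans hv.1, hv.2.trans hu.2⟩).1
  rw [hX.sub_eq (hsub hu).2.le, hX.sub_eq hu₀.le, hA]

theorem continuousOn_leftmost (hX : IsReflectedPath f X w A) (hY : IsReflectedPath f Y w B)
    (h0 : X 0 = Y 0) (hf : LipschitzWith 1 f) : ContinuousOn (leftmost X Y) (Ici 0) :=
  fun r hr => continuousWithinAt_leftmost (hX.continuousOn r hr) (hY.continuousOn r hr)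
    (hX.eq_of_fst_eq hY h0 hf hr)

theorem eventually_leftmost_sub_eq (hX : IsReflectedPath f X w A)
    (hY : IsReflectedPath f Y w B) (h0 : X 0 = Y 0) (hf : LipschitzWith 1 f) {u₀ : ℝ}
    (hu₀ : 0 < u₀) (hD : f (leftmost X Y u₀).1 < (leftmost X Y u₀).2) :
    ∀ᶠ u in 𝓝 u₀, leftmost X Y u - w u = leftmost X Y u₀ - w u₀ := by
  have hXc : ContinuousAt X u₀ := hX.continuousOn.continuousAt (Ici_mem_nhds hu₀)
  have hYc : ContinuousAt Y u₀ := hY.continuousOn.continuousAt (Ici_mem_nhds hu₀)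
  rcases lt_trichotomy (X u₀).1 (Y u₀).1 with h | h | h
  · have hV : ∀ᶠ u in 𝓝 u₀, leftmost X Y u = X u :=
      (hXc.fst.eventually_lt hYc.fst h).mono fun u hu => if_pos hu
    rw [hV.self_of_nhds] at hD ⊢
    filter_upwards [hV, hX.eventually_sub_eq hf.continuous hu₀ hD] with u hu hXu
    rw [hu, hXu]
  · have hXY := hX.eq_of_fst_eq hY h0 hf hu₀.le h
    have hV : leftmost X Y u₀ = Y u₀ := if_neg h.not_lt
    rw [hV] at hD ⊢
    filter_upwards [hX.eventually_sub_eq hf.continuous hu₀ (hXY ▸ hD),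
      hY.eventually_sub_eq hf.continuous hu₀ hD] with u hXu hYu
    unfold leftmost
    split_ifs
    · rw [hXu, hXY]
    · exact hYu
  · have hV : ∀ᶠ u in 𝓝 u₀, leftmost X Y u = Y u :=
      (hYc.fst.eventually_lt hXc.fst h).mono fun u hu => if_neg hu.asymm
    rw [hV.self_of_nhds] at hD ⊢
    filter_upwards [hV, hY.eventually_sub_eq hf.continuous hu₀ hD] with u hu hYu
    rw [hu, hYu]

end IsReflectedPath

theorem coupled_process_const_on_interior_general
    (f : ℝ → ℝ) (hf : LipschitzWith 1 f)
    (X Y w A B : ℝ → ℝ × ℝ)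
    (hXc : ContinuousOn X (Set.Ici 0)) (hYc : ContinuousOn Y (Set.Ici 0))
    (hwc : ContinuousOn w (Set.Ici 0))
    (hXD : ∀ t, 0 ≤ t → f (X t).1 ≤ (X t).2)
    (hYD : ∀ t, 0 ≤ t → f (Y t).1 ≤ (Y t).2)
    (h0 : X 0 = Y 0)
    (hXeq : ∀ t, 0 ≤ t → X t = X 0 + w t + A t)
    (hYeq : ∀ t, 0 ≤ t → Y t = Y 0 + w t + B t)
    (hAincr : ∀ s t, 0 ≤ s → s ≤ t → |(A t - A s).1| ≤ (A t - A s).2)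
    (hBincr : ∀ s t, 0 ≤ s → s ≤ t → |(B t - B s).1| ≤ (B t - B s).2)
    (hAconst : ∀ s t, 0 ≤ s → s ≤ t →
      (∀ u, u ∈ Set.Ioo s t → f (X u).1 < (X u).2) → A t = A s)
    (hBconst : ∀ s t, 0 ≤ s → s ≤ t →
      (∀ u, u ∈ Set.Ioo s t → f (Y u).1 < (Y u).2) → B t = B s)
    (V : ℝ → ℝ × ℝ)
    (hV : ∀ t, V t = if (X t).1 < (Y t).1 then X t else Y t) :
    ∀ s t, 0 ≤ s → s ≤ t →
      (∀ u, u ∈ Set.Ioo s t → f (V u).1 < (V u).2) →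
      V t - w t = V s - w s := by
  intro s t hs hst hVD
  have hX : IsReflectedPath f X w A := ⟨hXc, hXD, hXeq, hAincr, hAconst⟩
  have hY : IsReflectedPath f Y w B := ⟨hYc, hYD, hYeq, hBincr, hBconst⟩
  obtain rfl : V = leftmost X Y := funext hV
  refine eq_of_continuousOn_Icc_of_eventually_eq hst ?_ fun u hu =>
    hX.eventually_leftmost_sub_eq hY h0 hf (hs.trans_lt hu.1) (hVD u hu)
  exact ((hX.continuousOn_leftmost hY h0 hf).sub hwc).mono fun u hu => hs.trans hu.1

/-- Deterministic Skorokhod setup: the coupled process V is constant up to the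
driving path on intervals where it stays in D. -/
theorem coupled_process_const_on_interior
    (f : ℝ → ℝ) (hf : LipschitzWith 1 f)
    (X Y w A B : ℝ → ℝ × ℝ)
    (hXc : ContinuousOn X (Set.Ici 0)) (hYc : ContinuousOn Y (Set.Ici 0))
    (hwc : ContinuousOn w (Set.Ici 0))
    (hAc : ContinuousOn A (Set.Ici 0)) (hBc : ContinuousOn B (Set.Ici 0))
    (hXD : ∀ t, 0 ≤ t → f (X t).1 ≤ (X t).2)
    (hYD : ∀ t, 0 ≤ t → f (Y t).1 ≤ (Y t).2)
    (h0 : X 0 = Y 0)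
    (hXeq : ∀ t, 0 ≤ t → X t = X 0 + w t + A t)
    (hYeq : ∀ t, 0 ≤ t → Y t = Y 0 + w t + B t)
    (hw0 : w 0 = 0) (hA0 : A 0 = 0) (hB0 : B 0 = 0)
    (hAincr : ∀ s t, 0 ≤ s → s ≤ t → |(A t - A s).1| ≤ (A t - A s).2)
    (hBincr : ∀ s t, 0 ≤ s → s ≤ t → |(B t - B s).1| ≤ (B t - B s).2)
    (hAconst : ∀ s t, 0 ≤ s → s ≤ t →
      (∀ u, u ∈ Set.Ioo s t → f (X u).1 < (X u).2) → A t = A s)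
    (hBconst : ∀ s t, 0 ≤ s → s ≤ t →
      (∀ u, u ∈ Set.Ioo s t → f (Y u).1 < (Y u).2) → B t = B s)
    (V : ℝ → ℝ × ℝ)
    (hV : ∀ t, V t = if (X t).1 < (Y t).1 then X t else Y t) :
    ∀ s t, 0 ≤ s → s ≤ t →
      (∀ u, u ∈ Set.Ioo s t → f (V u).1 < (V u).2) →
      V t - w t = V s - w s :=
  coupled_process_const_on_interior_general f hf X Y w A B hXc hYc hwc hXD hYD h0 hXeq hYeq hAincr
    hBincr hAconst hBconst V hV
end
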